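/- For every integer g ≥ 1, every finitely generated subgroup of the group G_g is a free group; that is, G_g is locally free. -/

import Mathlib

/-- Generators for the group `G_g`: the generator `a_{k, 2i+1}` (odd-indexed, `1 ≤ 2i+1 ≤ 2g`)
is encoded as `(k, i, false)` and the generator `a_{k, 2i+2}` (even-indexed) as
`(k, i, true)`; in particular `a_{k,1}` is encoded as `(k, 0, false)`. -/
abbrev GropeGenerator (g : ℕ) : Type := ℕ × Fin g × Bool

open scoped commutatorElement

/-- The relator words of `G_g`: for each `k ∈ ℕ`, the relator
`a_{k,1}⁻¹ · ∏_{i=1}^{g} [a_{k+1,2i-1}, a_{k+1,2i}]`, expressing the relation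
`a_{k,1} = ∏_{i=1}^{g} [a_{k+1,2i-1}, a_{k+1,2i}]`. -/
def gropeRels (g : ℕ) : Set (FreeGroup (GropeGenerator g)) :=
  { r | ∃ (k : ℕ) (h : 0 < g),
      r = (FreeGroup.of ((k, ⟨0, h⟩, false) : GropeGenerator g))⁻¹ *
        (List.ofFn fun i : Fin g =>
          ⁅(FreeGroup.of ((k + 1, i, false) : GropeGenerator g) :
              FreeGroup (GropeGenerator g)),
            FreeGroup.of ((k + 1, i, true) : GropeGenerator g)⁆).prod }

/-- The group `G_g`, presented with generators `a_{k,i}` (`k ∈ ℕ`, `1 ≤ i ≤ 2g`) and,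
for each `k ∈ ℕ`, the single relation `a_{k,1} = ∏_{i=1}^{g} [a_{k+1,2i-1}, a_{k+1,2i}]`. -/
def GropeGroup (g : ℕ) : Type := PresentedGroup (gropeRels g)

noncomputable instance (g : ℕ) : Group (GropeGroup g) :=
  inferInstanceAs (Group (PresentedGroup (gropeRels g)))

/-!
The subgroup of `G_g` generated by the generators of level `≤ m` is free on the basis `B_m`
formed by these generators except the `a_{k,1}` with `k < m`, which the relations express
through higher levels. Passing from `B_m` to `B_{m+1}` substitutes for `a_{m,1}` the product of
commutators of `2g` fresh letters. This word is cyclically reduced, so the substitution never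
causes cancellation and is injective on free groups. A relation among `B_m` that holds in `G_g`
involves finitely many relators, and these all become trivial once every generator is rewritten
in `B_M` for `M` large. Since `F(B_m)` embeds in `F(B_M)` by composing substitutions, the relation
is trivial. Every finitely
generated subgroup lies in one of these free stages, so it is free by Nielsen–Schreier.
-/

namespace Subgroup

variable {G : Type*} [Group G]

theorem exists_le_of_fg_of_monotone {K : ℕ → Subgroup G} (hK : Monotone K)
    (hexh : ∀ x, ∃ m, x ∈ K m) {H : Subgroup G} (hH : H.FG) : ∃ m, H ≤ K m := by
  classical
  obtain ⟨S, rfl⟩ := hH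
  choose m hm using hexh
  exact ⟨S.sup m, (closure_le _).2 fun x hx => hK (Finset.le_sup hx) (hm x)⟩

theorem nonempty_isFreeGroup_of_le_range {X : Type*} {f : FreeGroup X →* G}
    (hf : Function.Injective f) {H : Subgroup G} (hH : H ≤ f.range) :
    Nonempty (IsFreeGroup H) :=
  ⟨IsFreeGroup.ofMulEquiv (((H.comap f).equivMapOfInjective f hf).trans
    (MulEquiv.subgroupCongr (map_comap_eq_self hH)))⟩

theorem eventually_map_eq_one_of_mem_normalClosure {ι : Type*} {l : Filter ι}
    {N : ι → Type*} [∀ i, Group (N i)] (f : ∀ i, G →* N i) {s : Set G}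
    (hs : ∀ r ∈ s, ∀ᶠ i in l, f i r = 1) {x : G} (hx : x ∈ normalClosure s) :
    ∀ᶠ i in l, f i x = 1 := by
  let K : Subgroup G :=
    { carrier := {x | ∀ᶠ i in l, f i x = 1}
      one_mem' := .of_forall fun i => map_one (f i)
      mul_mem' := fun ha hb => by filter_upwards [ha, hb] with i hai hbi; simp [hai, hbi]
      inv_mem' := fun ha => by filter_upwards [ha] with i hai; simp [hai] }
  have : K.Normal := ⟨fun x hx y => by filter_upwards [hx] with i hi; simp [hi]⟩
  exact normalClosure_le_normal (N := K) hs hx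

end Subgroup

def commutatorProduct {G : Type*} [Group G] {g : ℕ} (x y : Fin g → G) : G :=
  (List.ofFn fun i => ⁅x i, y i⁆).prod

theorem map_commutatorProduct {G H : Type*} [Group G] [Group H] {g : ℕ} (f : G →* H)
    (x y : Fin g → G) :
    f (commutatorProduct x y) = commutatorProduct (fun i => f (x i)) fun i => f (y i) := by
  simp [commutatorProduct, map_list_prod, List.map_ofFn, Function.comp_def,
    map_commutatorElement]

namespace FreeGroup

variable {α β : Type*}

theorem mk_singleton_false (a : α) : mk [(a, false)] = (of a)⁻¹ := rfl

section CommutatorWord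

variable {g : ℕ}

def commutatorWord (t : Fin g × Bool → β) : List (β × Bool) :=
  (List.ofFn fun i =>
    [(t (i, false), true), (t (i, true), true), (t (i, false), false), (t (i, true), false)]).flatten

theorem mk_commutatorWord (t : Fin g × Bool → β) :
    mk (commutatorWord t) =
      commutatorProduct (fun i => of (t (i, false))) fun i => of (t (i, true)) := by
  rw [← lift_of_apply (mk _)]
  simp [commutatorWord, commutatorProduct, lift_mk, List.map_flatten, List.prod_flatten,
    commutatorElement_def, List.map_ofFn, Function.comp_def, mul_assoc]

theorem isCyclicallyReduced_commutatorWord {t : Fin g × Bool → β} (ht : Function.Injective t) :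
    IsCyclicallyReduced (commutatorWord t) := by
  refine ⟨?_, ?_⟩
  · rw [IsReduced, commutatorWord, List.isChain_flatten (by simp), List.isChain_ofFn]
    refine ⟨fun l hl => ?_, fun i hi => by simp [ht.eq_iff]⟩
    obtain ⟨i, rfl⟩ := List.mem_ofFn.1 hl
    simp [ht.eq_iff]
  · cases g with
    | zero => simp [commutatorWord]
    | succ n =>
      have hhead : (commutatorWord t).head? = some (t (0, false), true) := by
        simp [commutatorWord, List.ofFn_succ]
      have hlast : (commutatorWord t).getLast? = some (t (Fin.last n, true), false) := by
        rw [commutatorWord, List.ofFn_succ']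
        simp
      simp [hhead, hlast, ht.eq_iff]

theorem commutatorWord_ne_nil [NeZero g] (t : Fin g × Bool → β) : commutatorWord t ≠ [] := by
  simp [commutatorWord]

theorem fst_mem_range_of_mem_commutatorWord {t : Fin g × Bool → β} {x : β × Bool}
    (hx : x ∈ commutatorWord t) : x.1 ∈ Set.range t := by
  simp only [commutatorWord, List.mem_flatten, List.mem_ofFn] at hx
  obtain ⟨_, ⟨i, rfl⟩, hx⟩ := hx
  simp only [List.mem_cons, List.not_mem_nil, or_false] at hx
  rcases hx with rfl | rfl | rfl | rfl <;> exact ⟨_, rfl⟩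

end CommutatorWord

variable [DecidableEq β]

theorem lift_mk_eq_mk_flatMap (F : α → FreeGroup β) (L : List (α × Bool)) :
    lift F (mk L) = mk (L.flatMap fun p => (lift F (mk [p])).toWord) := by
  induction L with
  | nil => rfl
  | cons p L ih =>
    rw [List.flatMap_cons, ← mul_mk, ← ih, mk_toWord, ← _root_.map_mul, mul_mk]
    rfl

theorem toWord_lift_mk_singleton_ne_nil {F : α → FreeGroup β} (hF : ∀ a, F a ≠ 1)
    (p : α × Bool) : (lift F (mk [p])).toWord ≠ [] := by
  obtain ⟨a, _ | _⟩ := p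
  · rw [Ne, toWord_eq_nil_iff, mk_singleton_false, _root_.map_inv, lift_apply_of, inv_eq_one]
    exact hF a
  · simpa [toWord_eq_nil_iff] using hF a

theorem injective_lift_of_no_cancellation {F : α → FreeGroup β} (hF : ∀ a, F a ≠ 1)
    (hjoin : ∀ p q : α × Bool, (p.1 = q.1 → p.2 = q.2) →
      ∀ x ∈ (lift F (mk [p])).toWord.getLast?, ∀ y ∈ (lift F (mk [q])).toWord.head?,
        x.1 = y.1 → x.2 = y.2) :
    Function.Injective (lift F) := by
  classical
  rw [injective_iff_map_eq_one]
  intro x hx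
  have hne := toWord_lift_mk_singleton_ne_nil hF
  have hW : IsReduced (x.toWord.flatMap fun p => (lift F (mk [p])).toWord) := by
    rw [IsReduced, List.flatMap_def, List.isChain_flatten fun h => by
      obtain ⟨p, -, hp⟩ := List.mem_map.1 h; exact hne p hp]
    refine ⟨fun l hl => ?_, (List.isChain_map _).2 (isReduced_toWord.imp fun p q => hjoin p q)⟩
    obtain ⟨p, -, rfl⟩ := List.mem_map.1 hl
    exact isReduced_toWord
  have hW_nil : x.toWord.flatMap (fun p => (lift F (mk [p])).toWord) = [] := by
    rw [← hW.reduce_eq, ← toWord_mk, ← lift_mk_eq_mk_flatMap, mk_toWord, hx, toWord_one]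
  rw [List.flatMap_eq_nil_iff] at hW_nil
  rw [← toWord_eq_nil_iff]
  exact List.eq_nil_iff_forall_not_mem.2 fun p hp => hne p (hW_nil p hp)

theorem isCyclicallyReduced_toWord_inv {w : FreeGroup β} (hw : IsCyclicallyReduced w.toWord) :
    IsCyclicallyReduced w⁻¹.toWord := by
  refine ⟨isReduced_toWord, ?_⟩
  simp only [toWord_inv, invRev, List.getLast?_reverse, List.head?_reverse, List.head?_map,
    List.getLast?_map, Option.mem_def, Option.map_eq_some_iff]
  rintro _ ⟨a, ha, rfl⟩ _ ⟨b, hb, rfl⟩ hab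
  simpa using (hw.2 b hb a ha hab.symm).symm

theorem mem_toWord_inv {w : FreeGroup β} {x : β × Bool} (hx : x ∈ w⁻¹.toWord) :
    (x.1, !x.2) ∈ w.toWord := by
  simp only [toWord_inv, invRev, List.mem_reverse, List.mem_map] at hx
  obtain ⟨y, hy, rfl⟩ := hx
  simpa using hy

theorem toWord_commutatorProduct_of {g : ℕ} {t : Fin g × Bool → β} (ht : Function.Injective t) :
    (commutatorProduct (fun i => of (t (i, false))) fun i => of (t (i, true))).toWord =
      commutatorWord t := by
  rw [← mk_commutatorWord, toWord_mk, (isCyclicallyReduced_commutatorWord ht).isReduced.reduce_eq]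

variable [DecidableEq α]

def substitute (s : α) (w : FreeGroup β) (ι : {a // a ≠ s} → β) (a : α) : FreeGroup β :=
  if h : a = s then w else of (ι ⟨a, h⟩)

theorem toWord_lift_substitute_of_ne {s : α} {w : FreeGroup β} {ι : {a // a ≠ s} → β}
    {a : α} (ha : a ≠ s) (b : Bool) :
    (lift (substitute s w ι) (mk [(a, b)])).toWord = [(ι ⟨a, ha⟩, b)] := by
  cases b
  · simp [mk_singleton_false, substitute, ha, toWord_inv, invRev]
  · simp [substitute, ha]

theorem injective_lift_substitute {s : α} {w : FreeGroup β} {ι : {a // a ≠ s} → β}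
    (hι : Function.Injective ι) (hw : IsCyclicallyReduced w.toWord) (hw1 : w ≠ 1)
    (hdisj : ∀ a, ∀ x ∈ w.toWord, x.1 ≠ ι a) :
    Function.Injective (lift (substitute s w ι)) := by
  have hs : ∀ b, IsCyclicallyReduced (lift (substitute s w ι) (mk [(s, b)])).toWord ∧
      ∀ a, ∀ x ∈ (lift (substitute s w ι) (mk [(s, b)])).toWord, x.1 ≠ ι a := by
    rintro (_ | _)
    · simp only [mk_singleton_false, _root_.map_inv, lift_apply_of, substitute, dite_true]
      exact ⟨isCyclicallyReduced_toWord_inv hw,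
        fun a x hx => hdisj a (x.1, !x.2) (mem_toWord_inv hx)⟩
    · exact ⟨by simpa [substitute] using hw, by simpa [substitute] using hdisj⟩
  refine injective_lift_of_no_cancellation (fun a => ?_) ?_
  · unfold substitute
    split_ifs
    exacts [hw1, of_ne_one _]
  rintro ⟨a, b⟩ ⟨a', b'⟩ hab x hx y hy hxy
  by_cases ha : a = s <;> by_cases ha' : a' = s
  · subst ha ha'
    obtain rfl : b = b' := hab rfl
    exact (hs b).1.2 x hx y hy hxy
  · rw [toWord_lift_substitute_of_ne ha'] at hy
    obtain rfl : _ = y := Option.some_injective _ hy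
    subst ha
    exact absurd hxy ((hs b).2 _ x (List.mem_of_mem_getLast? hx))
  · rw [toWord_lift_substitute_of_ne ha] at hx
    obtain rfl : _ = x := Option.some_injective _ hx
    subst ha'
    exact absurd hxy.symm ((hs b').2 _ y (List.mem_of_mem_head? hy))
  · rw [toWord_lift_substitute_of_ne ha] at hx
    rw [toWord_lift_substitute_of_ne ha'] at hy
    obtain rfl : _ = x := Option.some_injective _ hx
    obtain rfl : _ = y := Option.some_injective _ hy
    exact hab (congrArg Subtype.val (hι hxy))

theorem injective_lift_substitute_commutatorProduct {g : ℕ} [NeZero g] {s : α}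
    {t : Fin g × Bool → β} (ht : Function.Injective t) {ι : {a // a ≠ s} → β}
    (hι : Function.Injective ι) (hdisj : ∀ a p, ι a ≠ t p) :
    Function.Injective (lift (substitute s
      (commutatorProduct (fun i => of (t (i, false))) fun i => of (t (i, true))) ι)) := by
  refine injective_lift_substitute hι ?_ ?_ fun a x hx => ?_
  · rw [toWord_commutatorProduct_of ht]
    exact isCyclicallyReduced_commutatorWord ht
  · rw [Ne, ← toWord_eq_nil_iff, toWord_commutatorProduct_of ht]
    exact commutatorWord_ne_nil t
  · rw [toWord_commutatorProduct_of ht] at hx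
    obtain ⟨p, hp⟩ := fst_mem_range_of_mem_commutatorWord hx
    exact hp ▸ (hdisj a p).symm

end FreeGroup

namespace GropeGroup

open FreeGroup

variable (g : ℕ) [NeZero g]

def relator (k : ℕ) : FreeGroup (GropeGenerator g) :=
  (of (k, 0, false))⁻¹ *
    commutatorProduct (fun i => of (k + 1, i, false)) fun i => of (k + 1, i, true)

/-- The free basis `B_m` of the `m`-th stage: the generators of level `≤ m` except the
`a_{k,1}` with `k < m`. -/
def basis (m : ℕ) : Set (GropeGenerator g) := {x | x.1 ≤ m ∧ (x.2 = (0, false) → x.1 = m)}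

instance (m : ℕ) : DecidablePred (· ∈ basis g m) :=
  fun _ => inferInstanceAs (Decidable (_ ∧ _))

def incl (m : ℕ) : FreeGroup (basis g m) →* FreeGroup (GropeGenerator g) :=
  FreeGroup.map Subtype.val

noncomputable def stage (m : ℕ) : FreeGroup (basis g m) →* GropeGroup g :=
  (PresentedGroup.mk (gropeRels g)).comp (incl g m)

def firstBasis (m : ℕ) : basis g m := ⟨(m, 0, false), le_rfl, fun _ => rfl⟩

def newLetter (m : ℕ) (p : Fin g × Bool) : basis g (m + 1) := ⟨(m + 1, p), le_rfl, fun _ => rfl⟩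

def inclSucc (m : ℕ) (b : {b : basis g m // b ≠ firstBasis g m}) : basis g (m + 1) :=
  ⟨b.1.1, Nat.le_succ_of_le b.1.2.1,
    fun h => absurd (Subtype.ext (Prod.ext (b.1.2.2 h) h)) b.2⟩

def step (m : ℕ) : FreeGroup (basis g m) →* FreeGroup (basis g (m + 1)) :=
  lift (substitute (firstBasis g m)
    (commutatorProduct (fun i => of (newLetter g m (i, false))) fun i =>
      of (newLetter g m (i, true)))
    (inclSucc g m))

/-- Rewrites each generator in the basis `B_M` by applying the relations upwards; generators of
level above `M` are sent to `1`. -/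
def expand (M : ℕ) (x : GropeGenerator g) : FreeGroup (basis g M) :=
  if hx : x ∈ basis g M then of ⟨x, hx⟩
  else if x.1 < M then
    commutatorProduct (fun i => expand M (x.1 + 1, i, false)) fun i => expand M (x.1 + 1, i, true)
  else 1
termination_by M - x.1

variable {g}

theorem gropeRels_eq_range : gropeRels g = Set.range (relator g) := by
  ext r
  constructor
  · rintro ⟨k, -, rfl⟩
    exact ⟨k, rfl⟩
  · rintro ⟨k, rfl⟩
    exact ⟨k, Nat.pos_of_neZero g, rfl⟩

theorem step_injective (m : ℕ) : Function.Injective (step g m) := by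
  refine injective_lift_substitute_commutatorProduct (fun p q h => ?_) (fun b c h => ?_)
    fun b p h => ?_
  · simpa [newLetter] using congrArg (fun x : basis g (m + 1) => x.1.2) h
  · have := congrArg Subtype.val h
    exact Subtype.ext (Subtype.ext this)
  · have hlevel := congrArg (fun x : basis g (m + 1) => x.1.1) h
    have hb := b.1.2.1
    simp only [inclSucc, newLetter] at hlevel
    omega

theorem comp_incl_comp_step {K : Type*} [Group K] (h : FreeGroup (GropeGenerator g) →* K)
    {m : ℕ} (hm : h (relator g m) = 1) :
    (h.comp (incl g (m + 1))).comp (step g m) = h.comp (incl g m) := by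
  ext b
  simp only [MonoidHom.comp_apply, step, lift_apply_of, substitute]
  split_ifs with hb
  · subst hb
    rw [relator, _root_.map_mul, _root_.map_inv, inv_mul_eq_one] at hm
    simp [map_commutatorProduct, incl, hm, firstBasis, newLetter]
  · simp [incl, inclSucc]

theorem expand_of_mem {M : ℕ} {x : GropeGenerator g} (hx : x ∈ basis g M) :
    expand g M x = of ⟨x, hx⟩ := by
  rw [expand, dif_pos hx]

theorem expand_first {M k : ℕ} (hk : k < M) :
    expand g M (k, 0, false) =
      commutatorProduct (fun i => expand g M (k + 1, i, false)) fun i =>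
        expand g M (k + 1, i, true) := by
  rw [expand, dif_neg fun hx => hk.ne (hx.2 rfl), if_pos hk]

theorem lift_expand_relator {M k : ℕ} (hk : k < M) : lift (expand g M) (relator g k) = 1 := by
  rw [relator, _root_.map_mul, _root_.map_inv, map_commutatorProduct, lift_apply_of,
    expand_first hk]
  simp

theorem lift_expand_comp_incl_self (M : ℕ) : (lift (expand g M)).comp (incl g M) = .id _ := by
  ext b
  simp [incl, expand_of_mem b.2]

theorem injective_lift_expand_comp_incl {m M : ℕ} (hm : m ≤ M) :
    Function.Injective ((lift (expand g M)).comp (incl g m)) := by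
  induction hm using Nat.decreasingInduction with
  | self => rw [lift_expand_comp_incl_self]; exact Function.injective_id
  | of_succ k hk ih =>
    rw [← comp_incl_comp_step _ (lift_expand_relator hk)]
    exact ih.comp (step_injective k)

theorem stage_injective (m : ℕ) : Function.Injective (stage g m) := by
  rw [injective_iff_map_eq_one]
  intro x hx
  have hker : incl g m x ∈ Subgroup.normalClosure (Set.range (relator g)) := by
    rw [← gropeRels_eq_range, ← PresentedGroup.mk_eq_one_iff]
    exact hx
  have hev := Subgroup.eventually_map_eq_one_of_mem_normalClosure (fun M => lift (expand g M))
    (by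
      rintro _ ⟨k, rfl⟩
      filter_upwards [Filter.eventually_gt_atTop k] with M hM using lift_expand_relator hM)
    hker
  obtain ⟨M, hmM, hM⟩ := ((Filter.eventually_ge_atTop m).and hev).exists
  exact (injective_iff_map_eq_one _).1 (injective_lift_expand_comp_incl hmM) x hM

theorem monotone_range_stage : Monotone fun m => (stage g m).range := by
  refine monotone_nat_of_le_succ fun m => ?_
  unfold stage
  rw [← comp_incl_comp_step _ (PresentedGroup.one_of_mem (by
    rw [gropeRels_eq_range]; exact Set.mem_range_self m))]
  exact (MonoidHom.range_comp _ _).trans_le (Subgroup.map_le_range _ _)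

theorem exists_mem_range_stage (y : GropeGroup g) : ∃ m, y ∈ (stage g m).range := by
  rw [← Subgroup.mem_iSup_of_directed monotone_range_stage.directed_le]
  have hle : Subgroup.closure (Set.range PresentedGroup.of) ≤ ⨆ m, (stage g m).range := by
    refine (Subgroup.closure_le _).2 ?_
    rintro _ ⟨x, rfl⟩
    exact Subgroup.mem_iSup_of_mem x.1 ⟨of ⟨x, le_rfl, fun _ => rfl⟩, rfl⟩
  rw [PresentedGroup.closure_range_of] at hle
  exact hle trivial

end GropeGroup

/-- **Local freeness of `G_g`** (algebraic content of Theorem 2): for every `g ≥ 1`,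
every finitely generated subgroup of `G_g` is a free group. -/
theorem gropeGroup_locally_free (g : ℕ) (hg : 1 ≤ g) :
    ∀ H : Subgroup (GropeGroup g), H.FG → Nonempty (IsFreeGroup H) := by
  have : NeZero g := ⟨by omega⟩
  intro H hH
  obtain ⟨m, hm⟩ := Subgroup.exists_le_of_fg_of_monotone GropeGroup.monotone_range_stage
    GropeGroup.exists_mem_range_stage hH
  exact Subgroup.nonempty_isFreeGroup_of_le_range (GropeGroup.stage_injective m) hm
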